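/- For any positive integer b, the integral from 0 to 1 of b * Pr[Pois(b*t) < b] dt equals E[min(Pois(b), b)]. -/

import Mathlib

open Real Finset

/-!
Differentiating the Poisson distribution function in the rate gives
`d/dl P(Pois(l) ≤ k) = -P(Pois(l) = k)`, so after the substitution `l = b t` the integral becomes
`∑_{k<b} ∫_0^b P(Pois(l) = k) dl = ∑_{k<b} P(Pois(b) > k)`, which is `E[min(Pois(b), b)]`
by the tail-sum formula `min X b = ∑_{i<b} [i < X]`.
-/

/-- Poisson pmf with rate `l`. -/
noncomputable def ppmf (l : ℝ) (k : ℕ) : ℝ := Real.exp (-l) * l ^ k / (Nat.factorial k)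

/-- Expected value of `min(Pois(l), b)`. -/
noncomputable def truncMean (l : ℝ) (b : ℕ) : ℝ := ∑' k : ℕ, ppmf l k * (min k b : ℕ)

section TailSum

variable {M : Type*} [AddCommGroup M] [TopologicalSpace M] [IsTopologicalAddGroup M]
  {f : ℕ → M} {s : M}

theorem HasSum.ite_lt (hf : HasSum f s) (i : ℕ) :
    HasSum (fun k ↦ if i < k then f k else 0) (s - ∑ j ∈ range (i + 1), f j) := by
  have htail : HasSum (fun n ↦ (fun k ↦ if i < k then f k else 0) (n + (i + 1)))
      (s - ∑ j ∈ range (i + 1), f j) :=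
    ((hasSum_nat_add_iff' (i + 1)).2 hf).congr_fun fun n ↦ if_pos (by omega)
  have hhead : ∑ j ∈ range (i + 1), (if i < j then f j else 0) = 0 :=
    sum_eq_zero fun j hj ↦ if_neg (by rw [mem_range] at hj; omega)
  simpa only [hhead, add_zero] using
    (hasSum_nat_add_iff (f := fun k ↦ if i < k then f k else 0) (i + 1)).1 htail

theorem HasSum.min_nsmul (hf : HasSum f s) (b : ℕ) :
    HasSum (fun k ↦ min k b • f k) (∑ i ∈ range b, (s - ∑ j ∈ range (i + 1), f j)) := by
  have min_nsmul_eq (k : ℕ) : min k b • f k = ∑ i ∈ range b, if i < k then f k else 0 := by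
    have : (range b).filter (· < k) = range (min k b) := by ext; simp; omega
    rw [← sum_filter, this, sum_const, card_range]
  simpa only [min_nsmul_eq] using hasSum_sum fun i _ ↦ hf.ite_lt i

end TailSum

theorem hasSum_ppmf (l : ℝ) : HasSum (ppmf l) 1 := by
  have := (NormedSpace.expSeries_div_hasSum_exp l).mul_left (Real.exp (-l))
  rw [← Real.exp_eq_exp_ℝ, ← Real.exp_add, neg_add_cancel, Real.exp_zero] at this
  exact this.congr_fun fun k ↦ mul_div_assoc ..

theorem truncMean_eq_sum_range (l : ℝ) (b : ℕ) :
    truncMean l b = ∑ i ∈ range b, (1 - ∑ j ∈ range (i + 1), ppmf l j) := by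
  refine (((hasSum_ppmf l).min_nsmul b).congr_fun fun k ↦ ?_).tsum_eq
  rw [nsmul_eq_mul, mul_comm]

theorem continuous_ppmf (k : ℕ) : Continuous (ppmf · k) := by
  unfold ppmf
  fun_prop

theorem hasDerivAt_ppmf_zero (l : ℝ) : HasDerivAt (ppmf · 0) (-ppmf l 0) l := by
  simpa [ppmf] using (hasDerivAt_neg l).exp

theorem hasDerivAt_ppmf_succ (l : ℝ) (k : ℕ) :
    HasDerivAt (ppmf · (k + 1)) (ppmf l k - ppmf l (k + 1)) l := by
  refine (((hasDerivAt_neg l).exp.fun_mul (hasDerivAt_pow (k + 1) l)).div_const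
    ((k + 1).factorial : ℝ)).congr_deriv ?_
  simp only [ppmf, Nat.factorial_succ]
  push_cast
  field_simp
  ring

theorem hasDerivAt_sum_range_ppmf (l : ℝ) (k : ℕ) :
    HasDerivAt (fun l ↦ ∑ j ∈ range (k + 1), ppmf l j) (-ppmf l k) l := by
  induction k with
  | zero => simpa using hasDerivAt_ppmf_zero l
  | succ k ih =>
    simp_rw [sum_range_succ _ (k + 1)]
    exact (ih.fun_add (hasDerivAt_ppmf_succ l k)).congr_deriv (by ring)

theorem sum_range_ppmf_zero (k : ℕ) : ∑ j ∈ range (k + 1), ppmf 0 j = 1 := by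
  rw [sum_range_succ']
  simp [ppmf]

theorem integral_ppmf (c : ℝ) (k : ℕ) :
    ∫ l in (0 : ℝ)..c, ppmf l k = 1 - ∑ j ∈ range (k + 1), ppmf c j := by
  rw [intervalIntegral.integral_eq_sub_of_hasDerivAt
    (f := fun l ↦ -∑ j ∈ range (k + 1), ppmf l j)
    (fun l _ ↦ by simpa using (hasDerivAt_sum_range_ppmf l k).fun_neg)
    ((continuous_ppmf k).intervalIntegrable _ _), sum_range_ppmf_zero]
  ring

theorem integral_eq_truncMean_general (b : ℕ) :
    (∫ t in (0 : ℝ)..1, (b : ℝ) * ∑ k ∈ Finset.range b, ppmf ((b : ℝ) * t) k)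
      = truncMean b b := by
  calc (∫ t in (0 : ℝ)..1, (b : ℝ) * ∑ k ∈ range b, ppmf ((b : ℝ) * t) k)
      = ∫ l in (0 : ℝ)..b, ∑ k ∈ range b, ppmf l k := by
        rw [intervalIntegral.integral_const_mul, intervalIntegral.mul_integral_comp_mul_left
          (f := fun l ↦ ∑ k ∈ range b, ppmf l k), mul_zero, mul_one]
    _ = ∑ k ∈ range b, (1 - ∑ j ∈ range (k + 1), ppmf b j) := by
        rw [intervalIntegral.integral_finsetSum fun k _ ↦
          (continuous_ppmf k).intervalIntegrable _ _]
        exact sum_congr rfl fun k _ ↦ integral_ppmf b k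
    _ = truncMean b b := (truncMean_eq_sum_range b b).symm

theorem integral_eq_truncMean (b : ℕ) (hb : 0 < b) :
    (∫ t in (0 : ℝ)..1, (b : ℝ) * ∑ k ∈ Finset.range b, ppmf ((b : ℝ) * t) k)
      = truncMean b b :=
  integral_eq_truncMean_general b
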